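/- arXiv:2512.13378 — 5 statements merged into one kernel-verified Lean document; each statement's English description precedes it below -/
import Mathlib

section
/- For any coarse equivalence f : (X, d_X) → (Y, d_Y) between extended metric spaces, there exists a metric d' on Y such that the map f' : (X, d_X) → (Y, d'), equal to f as a function, is a quasi-isometry, and the identity map (Y, d') → (Y, d_Y) is a coarse equivalence. -/
/-!
Choose a coarse inverse `g : Y → X` of `f`, so that `d_Y (f (g y)) y ≤ r`, and give `Y`
the distance `d' y y' = d_X (g y) (g y') + [y ≠ y']`, the pullback of `d_X` along `g`
made separating by adding the discrete metric. The lower control of `f` makes `g ∘ f`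
uniformly close to the identity of `X`, so `f` is a quasi-isometry (with multiplicative
constants `1`) into `(Y, d')`. Since `f ∘ g` is uniformly close to the identity of `Y`,
the controls of `f` become, up to additive constants, controls of the identity
`(Y, d') → (Y, d_Y)`.
-/

open scoped ENNReal NNReal
open Filter

namespace CoarseStmt

variable {α β : Type*}

/-- Two maps into a space with extended distance `dB` are close if pointwise
distances of images are uniformly bounded by some finite constant. -/
def Close (dB : β → β → ℝ≥0∞) (f g : α → β) : Prop :=
  ∃ κ : ℝ≥0, ∀ x, dB (f x) (g x) ≤ κ

/-- `ρ` is an upper control for `f`: increasing, proper, and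
`dB (f x) (f x') ≤ ρ (dA x x')` whenever `dA x x'` is finite. -/
def IsUpperControl (dA : α → α → ℝ≥0∞) (dB : β → β → ℝ≥0∞) (f : α → β)
    (ρ : ℝ≥0 → ℝ≥0) : Prop :=
  Monotone ρ ∧ Tendsto ρ atTop atTop ∧
    ∀ x x', dA x x' ≠ ⊤ → dB (f x) (f x') ≤ ρ (dA x x').toNNReal

/-- A map is controlled if it admits an upper control. -/
def Controlled (dA : α → α → ℝ≥0∞) (dB : β → β → ℝ≥0∞) (f : α → β) : Prop :=
  ∃ ρ, IsUpperControl dA dB f ρ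

/-- `θ` is a lower control for `f`: increasing, proper,
`θ (dA x x') ≤ dB (f x) (f x')`, with the convention that infinite distances
in the domain map to infinite distances in the codomain. -/
def IsLowerControl (dA : α → α → ℝ≥0∞) (dB : β → β → ℝ≥0∞) (f : α → β)
    (θ : ℝ≥0 → ℝ≥0) : Prop :=
  Monotone θ ∧ Tendsto θ atTop atTop ∧
    (∀ x x', dA x x' = ⊤ → dB (f x) (f x') = ⊤) ∧
    (∀ x x', dA x x' ≠ ⊤ → (θ (dA x x').toNNReal : ℝ≥0∞) ≤ dB (f x) (f x'))

def HasLowerControl (dA : α → α → ℝ≥0∞) (dB : β → β → ℝ≥0∞) (f : α → β) : Prop :=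
  ∃ θ, IsLowerControl dA dB f θ

/-- Some `r`-neighbourhood of the image is everything. -/
def CoarselySurjective (dB : β → β → ℝ≥0∞) (f : α → β) : Prop :=
  ∃ r : ℝ≥0, ∀ y, ∃ x, dB (f x) y ≤ r

/-- `f` admits an affine upper control. -/
def CoarselyLipschitz (dA : α → α → ℝ≥0∞) (dB : β → β → ℝ≥0∞) (f : α → β) : Prop :=
  ∃ a b : ℝ≥0, ∀ x x', dB (f x) (f x') ≤ (a : ℝ≥0∞) * dA x x' + b

/-- A coarse equivalence: controlled, coarsely surjective, with a lower control. -/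
def CoarseEquivalence (dA : α → α → ℝ≥0∞) (dB : β → β → ℝ≥0∞) (f : α → β) : Prop :=
  Controlled dA dB f ∧ CoarselySurjective dB f ∧ HasLowerControl dA dB f

/-- A quasi-isometry: affine upper and lower controls, coarsely surjective. -/
def QuasiIsometry (dA : α → α → ℝ≥0∞) (dB : β → β → ℝ≥0∞) (f : α → β) : Prop :=
  CoarselyLipschitz dA dB f ∧
    (∃ a b : ℝ≥0, ∀ x x', dA x x' ≤ (a : ℝ≥0∞) * dB (f x) (f x') + b) ∧
    CoarselySurjective dB f

/-- Weighted path (pseudo)metric associated to an edge-weight function `E`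
(`E u v = ⊤` means no edge): the infimum of total weights over finite chains. -/
noncomputable def pathDist {V : Type*} (E : V → V → ℝ≥0∞) (u v : V) : ℝ≥0∞ :=
  ⨅ (n : ℕ) (p : ℕ → V) (_ : p 0 = u) (_ : p n = v),
    ∑ i ∈ Finset.range n, E (p i) (p (i + 1))

end CoarseStmt

namespace CoarseStmt

/-- `d` is an extended metric on its underlying type. -/
def IsEMetricFn {Y : Type*} (d : Y → Y → ℝ≥0∞) : Prop :=
  (∀ y, d y y = 0) ∧ (∀ y y', d y y' = d y' y) ∧
    (∀ a b c, d a c ≤ d a b + d b c) ∧ (∀ y y', d y y' = 0 → y = y')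

theorem tendsto_tsub_const_atTop (c : ℝ≥0) : Tendsto (fun t : ℝ≥0 => t - c) atTop atTop :=
  tendsto_atTop_atTop.2 fun b => ⟨b + c, fun _ h => le_tsub_of_add_le_right h⟩

theorem edist_le_edist_add_two_mul {α X : Type*} [PseudoEMetricSpace X] {h₁ h₂ : α → X}
    {s : ℝ≥0∞} (h : ∀ a, edist (h₁ a) (h₂ a) ≤ s) (a b : α) :
    edist (h₁ a) (h₁ b) ≤ edist (h₂ a) (h₂ b) + 2 * s :=
  calc edist (h₁ a) (h₁ b)
      ≤ edist (h₁ a) (h₂ a) + edist (h₂ a) (h₂ b) + edist (h₂ b) (h₁ b) := edist_triangle4 ..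
    _ ≤ s + edist (h₂ a) (h₂ b) + s := by
        gcongr
        exacts [h a, edist_comm (h₂ b) (h₁ b) ▸ h b]
    _ = edist (h₂ a) (h₂ b) + 2 * s := by ring

theorem IsLowerControl.exists_le_of_le {α β : Type*} {dA : α → α → ℝ≥0∞}
    {dB : β → β → ℝ≥0∞} {f : α → β} {θ : ℝ≥0 → ℝ≥0} (hθ : IsLowerControl dA dB f θ)
    (r : ℝ≥0) : ∃ s : ℝ≥0, ∀ a b, dB (f a) (f b) ≤ r → dA a b ≤ s := by
  obtain ⟨hmono, htop, hinf, hle⟩ := hθ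
  obtain ⟨s, hs⟩ := (htop.eventually_gt_atTop r).exists
  refine ⟨s, fun a b hab => ?_⟩
  have hfin : dA a b ≠ ⊤ := fun h => by simp [hinf a b h] at hab
  have hθr : θ (dA a b).toNNReal ≤ r := by exact_mod_cast (hle a b hfin).trans hab
  rw [← ENNReal.coe_toNNReal hfin, ENNReal.coe_le_coe]
  exact le_of_not_gt fun h => ((hmono h.le).trans hθr).not_gt hs

section InducedDist

variable {X Y : Type*} [PseudoEMetricSpace X]

open Classical in
noncomputable def inducedDist (g : Y → X) (y y' : Y) : ℝ≥0∞ :=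
  edist (g y) (g y') + if y = y' then 0 else 1

theorem isEMetricFn_inducedDist (g : Y → X) : IsEMetricFn (inducedDist g) := by
  classical
  refine ⟨fun y => by simp [inducedDist], fun y y' => ?_, fun a b c => ?_, fun y y' h => ?_⟩
  · simp only [inducedDist, edist_comm (g y), eq_comm (a := y)]
  · have hdisc : (if a = c then (0 : ℝ≥0∞) else 1) ≤
        (if a = b then 0 else 1) + (if b = c then 0 else 1) := by
      split_ifs <;> simp_all
    calc inducedDist g a c ≤ (edist (g a) (g b) + edist (g b) (g c)) +
          ((if a = b then 0 else 1) + (if b = c then 0 else 1)) :=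
          add_le_add (edist_triangle _ _ _) hdisc
      _ = inducedDist g a b + inducedDist g b c := by simp only [inducedDist]; ring
  · by_contra hne
    simp [inducedDist, hne] at h

theorem edist_le_inducedDist (g : Y → X) (y y' : Y) : edist (g y) (g y') ≤ inducedDist g y y' :=
  le_self_add

theorem inducedDist_le_edist_add_one (g : Y → X) (y y' : Y) :
    inducedDist g y y' ≤ edist (g y) (g y') + 1 := by
  unfold inducedDist
  gcongr
  split_ifs <;> simp

theorem inducedDist_eq_top_iff {g : Y → X} {y y' : Y} :
    inducedDist g y y' = ⊤ ↔ edist (g y) (g y') = ⊤ := by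
  unfold inducedDist
  split_ifs <;> simp

theorem toNNReal_inducedDist_tsub_one_le {g : Y → X} {y y' : Y} (hg : edist (g y) (g y') ≠ ⊤) :
    (inducedDist g y y').toNNReal - 1 ≤ (edist (g y) (g y')).toNNReal := by
  rw [tsub_le_iff_right]
  calc (inducedDist g y y').toNNReal ≤ (edist (g y) (g y') + 1).toNNReal :=
        ENNReal.toNNReal_mono (by simpa using hg) (inducedDist_le_edist_add_one g y y')
    _ = (edist (g y) (g y')).toNNReal + 1 := by
        rw [ENNReal.toNNReal_add hg ENNReal.one_ne_top, ENNReal.toNNReal_one]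

theorem quasiIsometry_inducedDist {f : X → Y} {g : Y → X} {s : ℝ≥0}
    (hgf : ∀ x, edist (g (f x)) x ≤ s) :
    QuasiIsometry edist (inducedDist g) f := by
  refine ⟨⟨1, 2 * s + 1, fun x x' => ?_⟩, ⟨1, 2 * s, fun x x' => ?_⟩, ⟨s + 1, fun y => ⟨g y, ?_⟩⟩⟩
  · calc inducedDist g (f x) (f x') ≤ edist (g (f x)) (g (f x')) + 1 :=
          inducedDist_le_edist_add_one g _ _
      _ ≤ edist x x' + 2 * s + 1 := by
          gcongr; exact edist_le_edist_add_two_mul (h₂ := id) hgf x x'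
      _ = 1 * edist x x' + ↑(2 * s + 1) := by push_cast; ring
  · calc edist x x' ≤ edist (g (f x)) (g (f x')) + 2 * s :=
          edist_le_edist_add_two_mul (h₁ := id) (fun x => edist_comm x _ ▸ hgf x) x x'
      _ ≤ inducedDist g (f x) (f x') + 2 * s := by gcongr; exact edist_le_inducedDist g _ _
      _ = 1 * inducedDist g (f x) (f x') + ↑(2 * s) := by push_cast; ring
  · calc inducedDist g (f (g y)) y ≤ edist (g (f (g y))) (g y) + 1 :=
          inducedDist_le_edist_add_one g _ _
      _ ≤ s + 1 := by gcongr; exact hgf (g y)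
      _ = ↑(s + 1) := by push_cast; rfl

variable [PseudoEMetricSpace Y] {f : X → Y} {g : Y → X} {r : ℝ≥0}

theorem isUpperControl_id_inducedDist {ρ : ℝ≥0 → ℝ≥0}
    (hρ : IsUpperControl edist edist f ρ)
    (hfg : ∀ y, edist (f (g y)) y ≤ r) :
    IsUpperControl (inducedDist g) edist id (fun t => ρ t + 2 * r) := by
  obtain ⟨hmono, htop, hle⟩ := hρ
  refine ⟨fun a b h => add_le_add_left (hmono h) _,
    tendsto_atTop_mono (fun _ => le_self_add) htop, fun y y' hfin => ?_⟩
  have hg : edist (g y) (g y') ≠ ⊤ := inducedDist_eq_top_iff.not.1 hfin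
  calc edist y y' ≤ edist (f (g y)) (f (g y')) + 2 * r :=
        edist_le_edist_add_two_mul (h₁ := id) (fun y => edist_comm y _ ▸ hfg y) y y'
    _ ≤ ρ (edist (g y) (g y')).toNNReal + 2 * r := by gcongr; exact hle _ _ hg
    _ ≤ ρ (inducedDist g y y').toNNReal + 2 * r := by
        gcongr; exact hmono (ENNReal.toNNReal_mono hfin (edist_le_inducedDist g y y'))
    _ = ↑(ρ (inducedDist g y y').toNNReal + 2 * r) := by push_cast; rfl

theorem isLowerControl_id_inducedDist {θ : ℝ≥0 → ℝ≥0}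
    (hθ : IsLowerControl edist edist f θ)
    (hfg : ∀ y, edist (f (g y)) y ≤ r) :
    IsLowerControl (inducedDist g) edist id (fun t => θ (t - 1) - 2 * r) := by
  obtain ⟨hmono, htop, hinf, hle⟩ := hθ
  have hfg_close : ∀ y y', edist (f (g y)) (f (g y')) ≤ edist y y' + 2 * r :=
    edist_le_edist_add_two_mul (h₂ := id) hfg
  refine ⟨fun a b h => tsub_le_tsub_right (hmono (tsub_le_tsub_right h 1)) _,
    tendsto_tsub_const_atTop _ |>.comp (htop.comp (tendsto_tsub_const_atTop 1)),
    fun y y' htop => ?_, fun y y' hfin => ?_⟩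
  · have := hfg_close y y'
    rw [hinf _ _ (inducedDist_eq_top_iff.1 htop), top_le_iff, ENNReal.add_eq_top] at this
    exact this.resolve_right (by simp [ENNReal.mul_eq_top])
  · have hg : edist (g y) (g y') ≠ ⊤ := inducedDist_eq_top_iff.not.1 hfin
    rw [ENNReal.coe_sub, tsub_le_iff_right]
    calc (θ ((inducedDist g y y').toNNReal - 1) : ℝ≥0∞)
        ≤ θ (edist (g y) (g y')).toNNReal := by
          exact_mod_cast hmono (toNNReal_inducedDist_tsub_one_le hg)
      _ ≤ edist (f (g y)) (f (g y')) := hle _ _ hg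
      _ ≤ edist y y' + 2 * r := hfg_close y y'
      _ = edist (id y) (id y') + ↑(2 * r) := by push_cast; rfl

end InducedDist

/-- Any coarse equivalence factors as a quasi-isometry onto a remetrised
codomain followed by the identity, which is a coarse equivalence. -/
theorem coarseEquivalence_factors_through_quasiIsometry
    {X Y : Type*} [EMetricSpace X] [EMetricSpace Y] (f : X → Y)
    (hf : CoarseEquivalence (fun x x' => edist x x') (fun y y' => edist y y') f) :
    ∃ d' : Y → Y → ℝ≥0∞, IsEMetricFn d' ∧
      QuasiIsometry (fun x x' => edist x x') d' f ∧
      CoarseEquivalence d' (fun y y' => edist y y') (id : Y → Y) := by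
  obtain ⟨⟨ρ, hρ⟩, ⟨r, hfg⟩, ⟨θ, hθ⟩⟩ := hf
  choose g hfg using hfg
  obtain ⟨s, hs⟩ := hθ.exists_le_of_le r
  have hgf : ∀ x, edist (g (f x)) x ≤ s := fun x => hs _ _ (hfg (f x))
  exact ⟨inducedDist g, isEMetricFn_inducedDist g, quasiIsometry_inducedDist hgf,
    ⟨⟨_, isUpperControl_id_inducedDist hρ hfg⟩, ⟨0, fun y => ⟨y, by simp⟩⟩,
      ⟨_, isLowerControl_id_inducedDist hθ hfg⟩⟩⟩

end CoarseStmt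
end

section
/- In any category, every monomorphism is strong if and only if every epimorphism is strong. -/
open CategoryTheory

/-- In any category, every monomorphism is strong if and only if every
epimorphism is strong. -/
theorem strongMono_forall_iff_strongEpi_forall
    {C : Type*} [Category C] :
    (∀ {X Y : C} (m : X ⟶ Y), Mono m → StrongMono m) ↔
      (∀ {A B : C} (e : A ⟶ B), Epi e → StrongEpi e) := by
  constructor
  · intro h A B e he
    refine ⟨he, fun X Y m hm => ?_⟩
    haveI := he
    exact (h m hm).rlp e
  · intro h X Y m hm
    refine ⟨hm, fun A B e he => ?_⟩
    haveI := hm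
    exact (h e he).llp m
end

section
/- Let f, g : A → X be maps between extended metric spaces. Define the doubled gluing D with underlying set X × {0,1}, with internal edges within each copy of X of weight equal to finite distances, glued edges of weight 1 between (x,0) and (x,1) for each x ∈ X, and glued edges of weight 1 between (f a, 0) and (g a, 1) for each a ∈ A; equip D with the weighted path metric. Then the projection r : D → Coeq(f,g), (x,i) ↦ x, is 1-Lipschitz, the section s : Coeq(f,g) → D, x ↦ (x,0), is 2-Lipschitz, and r ∘ s = id while s ∘ r is 1-close to the identity. In particular r is a quasi-isometry. -/
/-!
Both Lipschitz bounds are checked edge by edge: a map sending every edge of weight `w` to a pair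
of points at path distance at most `c * w` is `c`-Lipschitz for the path metrics. The projection
sends each edge of `D` to an edge of `Coeq(f,g)` of no larger weight (a vertical edge to a loop).
The section sends an internal edge to the same edge on sheet `0`, and a glued edge `f a ~ g a`
to the two-edge path `(f a, 0) — (g a, 1) — (g a, 0)` of length `2`. Since every `(x, i)` is joined
to `(x, 0)` by an edge of weight at most `1`, the triangle inequality then gives the lower
control of the projection.
-/

open scoped ENNReal NNReal
open Filter

namespace CoarseStmt

open Classical in
/-- Edge weights of `Coeq(f,g)`. -/
noncomputable def coeqWeight {A X : Type*} [EMetricSpace X]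
    (f g : A → X) (x x' : X) : ℝ≥0∞ :=
  edist x x' ⊓
    (if ∃ a, (f a = x ∧ g a = x') ∨ (f a = x' ∧ g a = x) then 1 else ⊤)

open Classical in
/-- Edge weights of the doubled gluing `D` on `X × Bool`: internal edges
within each copy of `X`, glued edges of weight `1` between `(x,0)` and `(x,1)`,
and glued edges of weight `1` between `(f a, 0)` and `(g a, 1)`. -/
noncomputable def dblWeight {A X : Type*} [EMetricSpace X]
    (f g : A → X) (p q : X × Bool) : ℝ≥0∞ :=
  if p.2 = q.2 then edist p.1 q.1
  else if p.1 = q.1 ∨ (p.2 = false ∧ ∃ a, f a = p.1 ∧ g a = q.1) ∨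
      (q.2 = false ∧ ∃ a, f a = q.1 ∧ g a = p.1) then 1 else ⊤

section PathDist

variable {V W : Type*} (E : V → V → ℝ≥0∞)

lemma pathDist_le_sum {u v : V} (n : ℕ) (p : ℕ → V) (h0 : p 0 = u) (hn : p n = v) :
    pathDist E u v ≤ ∑ i ∈ Finset.range n, E (p i) (p (i + 1)) :=
  (iInf_le _ n).trans <| (iInf_le _ p).trans <| (iInf_le _ h0).trans (iInf_le _ hn)

lemma pathDist_self (u : V) : pathDist E u u = 0 :=
  nonpos_iff_eq_zero.1 <| (pathDist_le_sum E 0 (fun _ => u) rfl rfl).trans_eq (by simp)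

lemma pathDist_le_weight (u v : V) : pathDist E u v ≤ E u v := by
  simpa using pathDist_le_sum E 1 (fun i => if i = 0 then u else v) rfl rfl

lemma pathDist_le_sum_add_sum {u w v : V} (m n : ℕ) (q p : ℕ → V)
    (hq0 : q 0 = u) (hqm : q m = w) (hp0 : p 0 = w) (hpn : p n = v) :
    pathDist E u v ≤ ∑ i ∈ Finset.range m, E (q i) (q (i + 1)) +
      ∑ i ∈ Finset.range n, E (p i) (p (i + 1)) := by
  set r : ℕ → V := fun i => if i ≤ m then q i else p (i - m) with hr
  have hr_left : ∀ i ≤ m, r i = q i := fun i hi => if_pos hi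
  have hr_right : ∀ i, r (m + i) = p i := by
    intro i
    rcases Nat.eq_zero_or_pos i with rfl | hi
    · simp [hr, hqm, hp0]
    · simp [hr, show ¬ m + i ≤ m by omega]
  have hrv : r (m + n) = v := (hr_right n).trans hpn
  refine (pathDist_le_sum E (m + n) r (by simp [hr, hq0]) hrv).trans_eq ?_
  rw [Finset.sum_range_add]
  congr 1
  · refine Finset.sum_congr rfl fun i hi => ?_
    rw [Finset.mem_range] at hi
    rw [hr_left i hi.le, hr_left (i + 1) hi]
  · refine Finset.sum_congr rfl fun i _ => ?_
    rw [hr_right, add_assoc, hr_right]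

lemma pathDist_triangle (u w v : V) :
    pathDist E u v ≤ pathDist E u w + pathDist E w v := by
  simp only [pathDist, ENNReal.iInf_add, ENNReal.add_iInf]
  exact le_iInf fun n => le_iInf fun p => le_iInf fun hp0 => le_iInf fun hpn =>
    le_iInf fun m => le_iInf fun q => le_iInf fun hq0 => le_iInf fun hqm =>
      pathDist_le_sum_add_sum E m n q p hq0 hqm hp0 hpn

lemma pathDist_le_sum_pathDist (n : ℕ) (p : ℕ → V) :
    pathDist E (p 0) (p n) ≤ ∑ i ∈ Finset.range n, pathDist E (p i) (p (i + 1)) := by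
  induction n with
  | zero => simp [pathDist_self]
  | succ n ih =>
    rw [Finset.sum_range_succ]
    exact (pathDist_triangle E _ (p n) _).trans (add_le_add_left ih _)

lemma pathDist_comp_le_mul (E' : W → W → ℝ≥0∞) (φ : V → W) (c : ℝ≥0)
    (hφ : ∀ u v, pathDist E' (φ u) (φ v) ≤ c * E u v) (u v : V) :
    pathDist E' (φ u) (φ v) ≤ c * pathDist E u v := by
  rcases eq_or_ne c 0 with rfl | hc
  · simpa using hφ u v
  rw [mul_comm, ← ENNReal.div_le_iff (by simpa using hc) ENNReal.coe_ne_top]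
  refine le_iInf fun n => le_iInf fun p => le_iInf fun h0 => le_iInf fun hn => ?_
  rw [ENNReal.div_le_iff (by simpa using hc) ENNReal.coe_ne_top, Finset.sum_mul]
  calc pathDist E' (φ u) (φ v) = pathDist E' (φ (p 0)) (φ (p n)) := by rw [h0, hn]
    _ ≤ ∑ i ∈ Finset.range n, pathDist E' (φ (p i)) (φ (p (i + 1))) :=
      pathDist_le_sum_pathDist E' n (φ ∘ p)
    _ ≤ _ := Finset.sum_le_sum fun i _ => (hφ _ _).trans_eq (mul_comm _ _)

end PathDist

lemma quasiIsometry_of_lipschitz_section {α β : Type*} {dA : α → α → ℝ≥0∞}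
    {dB : β → β → ℝ≥0∞} (hA : ∀ x y z, dA x z ≤ dA x y + dA y z) (hB : ∀ y, dB y y = 0)
    (r : α → β) (s : β → α) (c κ : ℝ≥0) (hr : ∀ x x', dB (r x) (r x') ≤ dA x x')
    (hs : ∀ y y', dA (s y) (s y') ≤ c * dB y y') (hrs : ∀ y, r (s y) = y)
    (hsr : ∀ x, dA (s (r x)) x ≤ κ) (hsr' : ∀ x, dA x (s (r x)) ≤ κ) :
    QuasiIsometry dA dB r := by
  refine ⟨⟨1, 0, fun x x' => by simpa using hr x x'⟩, ⟨c, 2 * κ, fun x x' => ?_⟩,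
    ⟨0, fun y => ⟨s y, by simp [hrs, hB]⟩⟩⟩
  calc dA x x' ≤ dA x (s (r x)) + (dA (s (r x)) (s (r x')) + dA (s (r x')) x') :=
        (hA _ _ _).trans (add_le_add_right (hA _ _ _) _)
    _ ≤ κ + (c * dB (r x) (r x') + κ) := by gcongr <;> simp only [hsr, hsr', hs]
    _ = c * dB (r x) (r x') + (2 * κ : ℝ≥0) := by push_cast; ring

section DoubledGluing

variable {A X : Type*} [EMetricSpace X] (f g : A → X)

lemma coeqWeight_le_dblWeight (p q : X × Bool) : coeqWeight f g p.1 q.1 ≤ dblWeight f g p q := by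
  rw [dblWeight]
  split_ifs with _ hedge
  · exact inf_le_left
  · rcases hedge with h | ⟨_, a, hfa, hga⟩ | ⟨_, a, hfa, hga⟩
    · simp [coeqWeight, h]
    · exact inf_le_right.trans_eq (if_pos ⟨a, .inl ⟨hfa, hga⟩⟩)
    · exact inf_le_right.trans_eq (if_pos ⟨a, .inr ⟨hfa, hga⟩⟩)
  · exact le_top

lemma dblWeight_fst_eq_le_one (x : X) (b b' : Bool) : dblWeight f g (x, b) (x, b') ≤ 1 := by
  unfold dblWeight
  split_ifs <;> simp_all

lemma dblWeight_glue_le_one (a : A) : dblWeight f g (f a, false) (g a, true) ≤ 1 := by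
  rw [dblWeight, if_neg (by simp), if_pos (.inr (.inl ⟨rfl, a, rfl, rfl⟩))]

lemma dblWeight_glue_symm_le_one (a : A) : dblWeight f g (g a, true) (f a, false) ≤ 1 := by
  rw [dblWeight, if_neg (by simp), if_pos (.inr (.inr ⟨rfl, a, rfl, rfl⟩))]

lemma pathDist_dblWeight_le_two_mul_coeqWeight (x x' : X) :
    pathDist (dblWeight f g) (x, false) (x', false) ≤ 2 * coeqWeight f g x x' := by
  rw [coeqWeight, mul_min]
  refine le_min ?_ ?_
  · refine (pathDist_le_weight _ _ _).trans ?_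
    simpa [dblWeight] using le_mul_of_one_le_left zero_le one_le_two
  split_ifs with hglued
  swap
  · simp
  have two_steps : ∀ y : X × Bool, dblWeight f g (x, false) y ≤ 1 →
      dblWeight f g y (x', false) ≤ 1 → pathDist (dblWeight f g) (x, false) (x', false) ≤ 2 * 1 :=
    fun y h₁ h₂ => (pathDist_triangle _ _ y _).trans <| by
      rw [two_mul]
      exact add_le_add ((pathDist_le_weight _ _ _).trans h₁) ((pathDist_le_weight _ _ _).trans h₂)
  obtain ⟨a, ⟨rfl, rfl⟩ | ⟨rfl, rfl⟩⟩ := hglued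
  · exact two_steps _ (dblWeight_glue_le_one f g a) (dblWeight_fst_eq_le_one f g _ _ _)
  · exact two_steps _ (dblWeight_fst_eq_le_one f g _ _ _) (dblWeight_glue_symm_le_one f g a)

lemma pathDist_coeqWeight_le_pathDist_dblWeight (u v : X × Bool) :
    pathDist (coeqWeight f g) u.1 v.1 ≤ pathDist (dblWeight f g) u v := by
  simpa using pathDist_comp_le_mul (dblWeight f g) (coeqWeight f g) Prod.fst 1
    (fun p q => by simpa using (pathDist_le_weight _ _ _).trans (coeqWeight_le_dblWeight f g p q))
    u v

lemma pathDist_dblWeight_le_two_mul_pathDist_coeqWeight (x x' : X) :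
    pathDist (dblWeight f g) (x, false) (x', false) ≤ 2 * pathDist (coeqWeight f g) x x' :=
  pathDist_comp_le_mul (coeqWeight f g) (dblWeight f g) (·, false) 2
    (pathDist_dblWeight_le_two_mul_coeqWeight f g) x x'

lemma pathDist_dblWeight_fst_eq_le_one (x : X) (b b' : Bool) :
    pathDist (dblWeight f g) (x, b) (x, b') ≤ 1 :=
  (pathDist_le_weight _ _ _).trans (dblWeight_fst_eq_le_one f g x b b')

end DoubledGluing

/-- The projection `r : D → Coeq(f,g)` is 1-Lipschitz, the section
`s : x ↦ (x, 0)` is 2-Lipschitz, `r ∘ s = id`, `s ∘ r` is 1-close to the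
identity; in particular `r` is a quasi-isometry. -/
theorem doubled_gluing_projection_quasiIsometry {A X : Type*} [EMetricSpace X]
    (f g : A → X) :
    (∀ u v : X × Bool,
      pathDist (coeqWeight f g) u.1 v.1 ≤ pathDist (dblWeight f g) u v) ∧
    (∀ x x' : X,
      pathDist (dblWeight f g) (x, false) (x', false) ≤
        2 * pathDist (coeqWeight f g) x x') ∧
    (∀ x : X, ((x, false) : X × Bool).1 = x) ∧
    (∀ u : X × Bool, pathDist (dblWeight f g) (u.1, false) u ≤ 1) ∧
    QuasiIsometry (pathDist (dblWeight f g)) (pathDist (coeqWeight f g))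
      (Prod.fst : X × Bool → X) := by
  exact ⟨pathDist_coeqWeight_le_pathDist_dblWeight f g,
    pathDist_dblWeight_le_two_mul_pathDist_coeqWeight f g, fun _ => rfl,
    fun u => pathDist_dblWeight_fst_eq_le_one f g u.1 false u.2,
    quasiIsometry_of_lipschitz_section (pathDist_triangle _) (pathDist_self _) Prod.fst
      (·, false) 2 1 (pathDist_coeqWeight_le_pathDist_dblWeight f g)
      (pathDist_dblWeight_le_two_mul_pathDist_coeqWeight f g) (fun _ => rfl)
      (fun u => pathDist_dblWeight_fst_eq_le_one f g u.1 false u.2)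
      (fun u => pathDist_dblWeight_fst_eq_le_one f g u.1 u.2 false)⟩

end CoarseStmt
end

section
/- Let 1 → Z → E →f→ G → 1 be a short exact sequence with Z, G finitely generated and E given the word metric on S_Z ∪ Ŝ_G (lifts of the generators of G), G the word metric on S_G. If s' : G → E is a controlled map with f ∘ s' κ-close to the identity on G, then there exists a Lipschitz map s : G → E with f ∘ s = id_G and s κ-close to s'. -/
open scoped ENNReal NNReal
open Filter

namespace CoarseStmt

/-- Word length with respect to a (symmetrised) generating set `S`:
the least length of a word in `S ∪ S⁻¹` representing `g` (or `⊤`). -/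
noncomputable def wordLen {G : Type*} [Group G] (S : Set G) (g : G) : ℝ≥0∞ :=
  ⨅ (l : List G) (_ : ∀ x ∈ l, x ∈ S ∨ x⁻¹ ∈ S) (_ : l.prod = g),
    (l.length : ℝ≥0∞)

/-- Left-invariant word metric associated to `S`. -/
noncomputable def wordDist {G : Type*} [Group G] (S : Set G) (a b : G) : ℝ≥0∞ :=
  wordLen S (a⁻¹ * b)

end CoarseStmt

/-!
Lift a shortest word for `(f (s' g))⁻¹ * g` letter by letter through `Ŝ_G` and multiply `s' g`
by the result: this gives a section `s` of `f` within `κ` of `s'`. A map within bounded distance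
of a controlled map is controlled, and a controlled map `F` out of a group with a word metric is
Lipschitz: if `ρ` is an upper control, neighbours `g`, `g * x` go to points at distance at most
`ρ 1`, and `g`, `g'` are joined by a chain of `wordDist S g g'` neighbours.
-/

namespace CoarseStmt

section WordMetric

variable {G : Type*} [Group G] {S : Set G}

lemma wordLen_le_length {l : List G} (hl : ∀ x ∈ l, x ∈ S ∨ x⁻¹ ∈ S) :
    wordLen S l.prod ≤ l.length :=
  iInf_le_of_le l (iInf_le_of_le hl (iInf_le_of_le rfl le_rfl))

lemma wordLen_one : wordLen S (1 : G) = 0 :=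
  nonpos_iff_eq_zero.mp (by simpa using wordLen_le_length (S := S) (l := []) (by simp))

lemma wordLen_le_one {x : G} (hx : x ∈ S ∨ x⁻¹ ∈ S) : wordLen S x ≤ 1 := by
  simpa using wordLen_le_length (l := [x]) (by simpa using hx)

lemma exists_list_wordLen_eq {g : G} (h : wordLen S g ≠ ⊤) :
    ∃ l : List G, (∀ x ∈ l, x ∈ S ∨ x⁻¹ ∈ S) ∧ l.prod = g ∧ (l.length : ℝ≥0∞) = wordLen S g := by
  classical
  have hex : ∃ n, ∃ l : List G, ((∀ x ∈ l, x ∈ S ∨ x⁻¹ ∈ S) ∧ l.prod = g) ∧ l.length = n := by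
    by_contra! hword
    exact h (by simpa [wordLen] using fun l hl hprod => hword _ l ⟨hl, hprod⟩ rfl)
  obtain ⟨l, ⟨hl, hprod⟩, hlen⟩ := Nat.find_spec hex
  refine ⟨l, hl, hprod, le_antisymm ?_ (hprod ▸ wordLen_le_length hl)⟩
  refine le_iInf fun l' => le_iInf fun hl' => le_iInf fun hprod' => ?_
  rw [hlen]
  exact_mod_cast Nat.find_min' hex ⟨l', ⟨hl', hprod'⟩, rfl⟩

lemma wordLen_ne_top (hS : Subgroup.closure S = ⊤) (g : G) : wordLen S g ≠ ⊤ := by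
  have hg : g ∈ Submonoid.closure (S ∪ S⁻¹) := by
    rw [← Subgroup.closure_toSubmonoid, hS]; trivial
  obtain ⟨l, hl, rfl⟩ := Submonoid.exists_list_of_mem_closure hg
  exact ne_top_of_le_ne_top (ENNReal.natCast_ne_top _) (wordLen_le_length hl)

lemma wordLen_inv_le (g : G) : wordLen S g⁻¹ ≤ wordLen S g := by
  refine le_iInf fun l => le_iInf fun hl => le_iInf fun hprod => ?_
  subst hprod
  rw [List.prod_inv_reverse]
  refine (wordLen_le_length fun x hx => ?_).trans (by simp)
  obtain ⟨y, hy, rfl⟩ := List.mem_map.mp (List.mem_reverse.mp hx)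
  simpa [or_comm] using hl y hy

lemma wordLen_inv (g : G) : wordLen S g⁻¹ = wordLen S g :=
  le_antisymm (wordLen_inv_le g) (by simpa using wordLen_inv_le (S := S) g⁻¹)

lemma wordLen_mul_le (a b : G) : wordLen S (a * b) ≤ wordLen S a + wordLen S b := by
  rcases eq_or_ne (wordLen S a) ⊤ with ha | ha
  · simp [ha]
  rcases eq_or_ne (wordLen S b) ⊤ with hb | hb
  · simp [hb]
  obtain ⟨la, hla, rfl, hlen_a⟩ := exists_list_wordLen_eq ha
  obtain ⟨lb, hlb, rfl, hlen_b⟩ := exists_list_wordLen_eq hb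
  calc wordLen S (la.prod * lb.prod)
      ≤ (la ++ lb).length := by
        rw [← List.prod_append]
        exact wordLen_le_length fun x hx => (List.mem_append.mp hx).elim (hla x) (hlb x)
    _ = wordLen S la.prod + wordLen S lb.prod := by
        rw [List.length_append, Nat.cast_add, hlen_a, hlen_b]

lemma wordDist_self (a : G) : wordDist S a a = 0 := by
  simp [wordDist, wordLen_one]

lemma wordDist_comm (a b : G) : wordDist S a b = wordDist S b a := by
  rw [wordDist, wordDist, ← wordLen_inv, mul_inv_rev, inv_inv]

lemma wordDist_triangle (a b c : G) : wordDist S a c ≤ wordDist S a b + wordDist S b c := by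
  simpa [wordDist, mul_assoc] using wordLen_mul_le (S := S) (a⁻¹ * b) (b⁻¹ * c)

end WordMetric

section Lipschitz

variable {G H : Type*} [Group G] [Group H] {S : Set G} {T : Set H}

lemma wordDist_mul_prod_le {F : G → H} {L : ℝ≥0}
    (hF : ∀ g x, x ∈ S ∨ x⁻¹ ∈ S → wordDist T (F g) (F (g * x)) ≤ L) :
    ∀ (l : List G), (∀ x ∈ l, x ∈ S ∨ x⁻¹ ∈ S) →
      ∀ g, wordDist T (F g) (F (g * l.prod)) ≤ l.length * L
  | [], _, g => by simp [wordDist_self]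
  | x :: l, hl, g => by
    calc wordDist T (F g) (F (g * (x :: l).prod))
        ≤ wordDist T (F g) (F (g * x)) + wordDist T (F (g * x)) (F (g * x * l.prod)) := by
          rw [List.prod_cons, ← mul_assoc]
          exact wordDist_triangle _ _ _
      _ ≤ L + l.length * L :=
          add_le_add (hF g x (hl x List.mem_cons_self))
            (wordDist_mul_prod_le hF l (fun y hy => hl y (List.mem_cons_of_mem x hy)) _)
      _ = (x :: l).length * L := by
          rw [List.length_cons, Nat.cast_succ]; ring

lemma wordDist_le_mul_wordDist_of_forall_letter (hS : Subgroup.closure S = ⊤) {F : G → H}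
    {L : ℝ≥0} (hF : ∀ g x, x ∈ S ∨ x⁻¹ ∈ S → wordDist T (F g) (F (g * x)) ≤ L) (g g' : G) :
    wordDist T (F g) (F g') ≤ L * wordDist S g g' := by
  obtain ⟨l, hl, hprod, hlen⟩ := exists_list_wordLen_eq (wordLen_ne_top hS (g⁻¹ * g'))
  have hg' : g' = g * l.prod := by rw [hprod, mul_inv_cancel_left]
  rw [show wordDist S g g' = l.length from hlen.symm, mul_comm, hg']
  exact wordDist_mul_prod_le hF l hl g

lemma Controlled.exists_lipschitz (hS : Subgroup.closure S = ⊤) {F : G → H}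
    (hF : Controlled (wordDist S) (wordDist T) F) :
    ∃ L : ℝ≥0, ∀ g g', wordDist T (F g) (F g') ≤ L * wordDist S g g' := by
  obtain ⟨ρ, hρ_mono, -, hρ⟩ := hF
  refine ⟨ρ 1, wordDist_le_mul_wordDist_of_forall_letter hS fun g x hx => ?_⟩
  have hx1 : wordDist S g (g * x) ≤ 1 := by
    simpa [wordDist] using wordLen_le_one hx
  refine (hρ g (g * x) (ne_top_of_le_ne_top ENNReal.one_ne_top hx1)).trans ?_
  exact_mod_cast hρ_mono (by simpa using ENNReal.toNNReal_mono ENNReal.one_ne_top hx1)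

end Lipschitz

lemma Controlled.of_close {α H : Type*} [Group H] {T : Set H} {dA : α → α → ℝ≥0∞}
    {F F' : α → H} (hF : Controlled dA (wordDist T) F) {κ : ℝ≥0}
    (hclose : ∀ x, wordDist T (F' x) (F x) ≤ κ) : Controlled dA (wordDist T) F' := by
  obtain ⟨ρ, hρ_mono, hρ_tendsto, hρ⟩ := hF
  refine ⟨fun t => ρ t + 2 * κ, fun t t' htt' => add_le_add_left (hρ_mono htt') _,
    tendsto_atTop_mono (fun _ => le_self_add) hρ_tendsto, fun x x' hxx' => ?_⟩
  calc wordDist T (F' x) (F' x')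
      ≤ wordDist T (F' x) (F x) + (wordDist T (F x) (F x') + wordDist T (F x') (F' x')) :=
        (wordDist_triangle _ (F x) _).trans (add_le_add_right (wordDist_triangle _ _ _) _)
    _ ≤ κ + (ρ (dA x x').toNNReal + κ) := by
        rw [wordDist_comm (F x')]
        exact add_le_add (hclose x) (add_le_add (hρ x x' hxx') (hclose x'))
    _ = ↑(ρ (dA x x').toNNReal + 2 * κ) := by push_cast; ring

lemma exists_list_lift {E G : Type*} [Group E] [Group G] {f : E →* G} {T : Set E} {S : Set G}
    (hT : Set.SurjOn f T S) :
    ∀ l : List G, (∀ x ∈ l, x ∈ S ∨ x⁻¹ ∈ S) →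
      ∃ l' : List E, (∀ y ∈ l', y ∈ T ∨ y⁻¹ ∈ T) ∧ l'.map f = l
  | [], _ => ⟨[], by simp, rfl⟩
  | x :: l, hl => by
    obtain ⟨l', hl', rfl⟩ := exists_list_lift hT l fun y hy => hl y (List.mem_cons_of_mem x hy)
    have hletter : ∃ y, (y ∈ T ∨ y⁻¹ ∈ T) ∧ f y = x := by
      rcases hl x List.mem_cons_self with hx | hx
      · obtain ⟨y, hy, rfl⟩ := hT hx
        exact ⟨y, Or.inl hy, rfl⟩
      · obtain ⟨y, hy, hfy⟩ := hT hx
        exact ⟨y⁻¹, Or.inr (by simpa using hy), by rw [map_inv, hfy, inv_inv]⟩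
    obtain ⟨y, hy, rfl⟩ := hletter
    exact ⟨y :: l', List.forall_mem_cons.mpr ⟨hy, hl'⟩, rfl⟩

lemma exists_section_wordDist_le {E G : Type*} [Group E] [Group G] {f : E →* G} {T : Set E}
    {S : Set G} (hT : Set.SurjOn f T S) (s' : G → E) {κ : ℝ≥0}
    (hclose : ∀ g, wordDist S (f (s' g)) g ≤ κ) :
    ∃ s : G → E, (∀ g, f (s g) = g) ∧ ∀ g, wordDist T (s g) (s' g) ≤ κ := by
  have hcorr : ∀ g, ∃ z : E, f z = (f (s' g))⁻¹ * g ∧ wordLen T z ≤ κ := by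
    intro g
    obtain ⟨l, hl, hprod, hlen⟩ :=
      exists_list_wordLen_eq (ne_top_of_le_ne_top ENNReal.coe_ne_top (hclose g))
    obtain ⟨l', hl', rfl⟩ := exists_list_lift hT l hl
    refine ⟨l'.prod, by rw [← hprod, map_list_prod], ?_⟩
    calc wordLen T l'.prod ≤ l'.length := wordLen_le_length hl'
      _ = wordDist S (f (s' g)) g := by rw [← List.length_map f, hlen, wordDist]
      _ ≤ κ := hclose g
  choose z hz_fiber hz_len using hcorr
  refine ⟨fun g => s' g * z g, fun g => by simp [hz_fiber], fun g => ?_⟩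
  simpa [wordDist, wordLen_inv] using hz_len g

end CoarseStmt

open CoarseStmt in
theorem controlled_coarse_section_gives_lipschitz_section_general
    {E G : Type*} [Group E] [Group G] (f : E →* G)
    (SZ : Set E) (SG : Set G) (SGhat : Set E)
    (hSGgen : Subgroup.closure SG = ⊤)
    (hlift : Set.BijOn f SGhat SG)
    (s' : G → E)
    (hs' : Controlled (wordDist SG) (wordDist (SZ ∪ SGhat)) s')
    (κ : ℝ≥0) (hclose : ∀ g : G, wordDist SG (f (s' g)) g ≤ (κ : ℝ≥0∞)) :
    ∃ s : G → E, (∀ g : G, f (s g) = g) ∧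
      (∀ g : G, wordDist (SZ ∪ SGhat) (s g) (s' g) ≤ (κ : ℝ≥0∞)) ∧
      ∃ L : ℝ≥0, ∀ g g' : G,
        wordDist (SZ ∪ SGhat) (s g) (s g') ≤ (L : ℝ≥0∞) * wordDist SG g g' := by
  obtain ⟨s, hsection, hs_close⟩ :=
    exists_section_wordDist_le (hlift.surjOn.mono Set.subset_union_right subset_rfl) s' hclose
  exact ⟨s, hsection, hs_close, (hs'.of_close hs_close).exists_lipschitz hSGgen⟩

open CoarseStmt in
/-- For a short exact sequence `1 → Z → E → G → 1` with word metrics as above: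
any controlled `s' : G → E` with `f ∘ s'` κ-close to the identity is κ-close
to a genuine Lipschitz section `s` of `f`. -/
theorem controlled_coarse_section_gives_lipschitz_section
    {E G : Type*} [Group E] [Group G] (f : E →* G)
    (hfsurj : Function.Surjective f)
    (SZ : Set E) (SG : Set G) (SGhat : Set E)
    (hSZfin : SZ.Finite) (hSGfin : SG.Finite)
    (hSZker : Subgroup.closure SZ = f.ker)
    (hSGgen : Subgroup.closure SG = ⊤)
    (hlift : Set.BijOn f SGhat SG)
    (s' : G → E)
    (hs' : Controlled (wordDist SG) (wordDist (SZ ∪ SGhat)) s')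
    (κ : ℝ≥0) (hclose : ∀ g : G, wordDist SG (f (s' g)) g ≤ (κ : ℝ≥0∞)) :
    ∃ s : G → E, (∀ g : G, f (s g) = g) ∧
      (∀ g : G, wordDist (SZ ∪ SGhat) (s g) (s' g) ≤ (κ : ℝ≥0∞)) ∧
      ∃ L : ℝ≥0, ∀ g g' : G,
        wordDist (SZ ∪ SGhat) (s g) (s g') ≤ (L : ℝ≥0∞) * wordDist SG g g' :=
  controlled_coarse_section_gives_lipschitz_section_general f SZ SG SGhat hSGgen hlift s' hs' κ
    hclose
end

section
/- Define the comb graph X ⊆ ℤ² as the graph consisting of the horizontal ray [0,∞) × {0} together with vertical teeth attached according to the comb construction, and let f : X → [0,∞) be (x,y) ↦ x where X carries the graph path metric and [0,∞) the Euclidean metric. Then f is 1-Lipschitz and the map x ↦ (x,0) is an isometric embedding that is a right inverse of f; nevertheless, for every σ ≥ 1 and every n ≥ 1 there exist points v, v' ∈ X with |f(v) − f(v')| = σ + 1 such that every pair (u, u') with d_X(u,v) ≤ n, d_X(u',v') ≤ n satisfies |f(u) − f(u')| = σ + 1 > σ. Hence K_{σ+1}(f) is not contained in the n-neighbourhood of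 K_σ(f) for any n, i.e., the coarse kernel filtration of f does not stabilise. -/
open scoped ENNReal NNReal
open Filter

namespace CoarseStmt

/-- Horizontal position at which block `m` of teeth begins: the total
advance made by blocks `1, …, m-1` (block `i` advances by `1 + 2 + ⋯ + i`). -/
def combBase (m : ℕ) : ℕ := ∑ i ∈ Finset.range m, i * (i + 1) / 2

/-- The vertex set of the comb graph: the horizontal ray `[0,∞) × {0}`
together with, for each block `m ≥ 1` and each `1 ≤ j ≤ m`, a vertical tooth
of height `m` at horizontal position `combBase m + j(j-1)/2`. -/
def combSet : Set (ℤ × ℤ) :=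
  {p | (p.2 = 0 ∧ 0 ≤ p.1) ∨
    ∃ m j : ℕ, 1 ≤ m ∧ 1 ≤ j ∧ j ≤ m ∧
      p.1 = ((combBase m + j * (j - 1) / 2 : ℕ) : ℤ) ∧ 0 ≤ p.2 ∧ p.2 ≤ (m : ℤ)}

/-- The comb graph, as a set of vertices. -/
def Comb : Type := ↥combSet

/-- Adjacency in the comb graph: lattice neighbours, with horizontal edges
only along the axis and vertical edges only within a common column. -/
def combAdj (p q : Comb) : Prop :=
  (|p.val.1 - q.val.1| + |p.val.2 - q.val.2| = 1) ∧
    (p.val.1 = q.val.1 ∨ (p.val.2 = 0 ∧ q.val.2 = 0))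

open Classical in
/-- Unit edge weights of the comb graph. -/
noncomputable def combEdge (p q : Comb) : ℝ≥0∞ := if combAdj p q then 1 else ⊤

/-- The path metric on the comb graph. -/
noncomputable def combDist : Comb → Comb → ℝ≥0∞ := pathDist combEdge

/-- The horizontal projection `f : X → [0,∞)`, `(x,y) ↦ x`. -/
def combProj (p : Comb) : ℝ := (p.val.1 : ℝ)


theorem edist_le_pathDist {V : Type*} (E : V → V → ℝ≥0∞) (g : V → ℝ)
    (hg : ∀ p q, edist (g p) (g q) ≤ E p q) (u v : V) :
    edist (g u) (g v) ≤ pathDist E u v := by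
  refine le_iInf fun n => le_iInf fun p => le_iInf fun h0 => le_iInf fun hn => ?_
  subst h0 hn
  induction n with
  | zero => simp
  | succ k ih =>
    rw [Finset.sum_range_succ]
    calc edist (g (p 0)) (g (p (k+1))) ≤ edist (g (p 0)) (g (p k)) + edist (g (p k)) (g (p (k+1))) :=
          edist_triangle _ _ _
    _ ≤ (∑ i ∈ Finset.range k, E (p i) (p (i + 1))) + E (p k) (p (k+1)) := add_le_add ih (hg _ _)

theorem real_edist_le_ofReal {a b c : ℝ} (h : |a - b| ≤ c) : edist a b ≤ ENNReal.ofReal c := by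
  rw [edist_dist, Real.dist_eq]; exact ENNReal.ofReal_le_ofReal h

theorem edge_bound (g : Comb → ℝ) (hg : ∀ p q, combAdj p q → |g p - g q| ≤ 1) :
    ∀ p q, edist (g p) (g q) ≤ combEdge p q := by
  intro p q
  unfold combEdge
  split_ifs with h
  · simpa using real_edist_le_ofReal (hg p q h)
  · exact le_top

theorem proj_lip : ∀ p q : Comb, edist (combProj p) (combProj q) ≤ combDist p q := by
  intro p q
  refine edist_le_pathDist _ _ (edge_bound _ ?_) p q
  intro p q ⟨h1, _⟩
  unfold combProj
  have h2 := abs_nonneg (p.val.2 - q.val.2)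
  have h3 : |p.val.1 - q.val.1| ≤ 1 := by omega
  have : ((|p.val.1 - q.val.1| : ℤ) : ℝ) ≤ ((1:ℤ) : ℝ) := by exact_mod_cast h3
  rw [Int.cast_abs, Int.cast_sub, Int.cast_one] at this
  exact this

theorem col_of_dist_le (v u : Comb) (n : ℕ) (hv : (n : ℤ) < v.val.2)
    (h : combDist u v ≤ (n : ℝ≥0∞) ∨ combDist v u ≤ (n : ℝ≥0∞)) :
    u.val.1 = v.val.1 := by
  classical
  set g : Comb → ℝ := fun w => if w.val.1 = v.val.1 then ((v.val.2 - w.val.2 : ℤ) : ℝ) else ((v.val.2 : ℤ) : ℝ) with hgdef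
  have hg : ∀ p q, combAdj p q → |g p - g q| ≤ 1 := by
    rintro p q ⟨h1, h2⟩
    rcases eq_or_ne p.val.1 q.val.1 with hx | hx
    · by_cases hp : p.val.1 = v.val.1
      · have hq : q.val.1 = v.val.1 := hx ▸ hp
        simp only [hgdef, if_pos hp, if_pos hq]
        have : |p.val.2 - q.val.2| ≤ 1 := by
          have := abs_nonneg (p.val.1 - q.val.1); omega
        have h4 : |((p.val.2 : ℤ) : ℝ) - ((q.val.2 : ℤ) : ℝ)| ≤ 1 := by
          have h5 : ((|p.val.2 - q.val.2| : ℤ) : ℝ) ≤ ((1:ℤ) : ℝ) := by exact_mod_cast this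
          rw [Int.cast_abs, Int.cast_sub, Int.cast_one] at h5; exact h5
        push_cast
        have h6 : ((v.val.2 : ℤ) : ℝ) - ((p.val.2 : ℤ) : ℝ) - (((v.val.2 : ℤ) : ℝ) - ((q.val.2 : ℤ) : ℝ)) = -(((p.val.2 : ℤ) : ℝ) - ((q.val.2 : ℤ) : ℝ)) := by ring
        rw [h6, abs_neg]; exact h4
      · have hq : ¬ q.val.1 = v.val.1 := hx ▸ hp
        simp [hgdef, if_neg hp, if_neg hq]
    · rcases h2 with h2 | ⟨hp0, hq0⟩
      · exact absurd h2 hx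
      · have : g p = ((v.val.2 : ℤ) : ℝ) := by
          simp only [hgdef]; split_ifs <;> simp [hp0]
        have hq : g q = ((v.val.2 : ℤ) : ℝ) := by
          simp only [hgdef]; split_ifs <;> simp [hq0]
        rw [this, hq]; simp
  have key : edist (g u) (g v) ≤ (n : ℝ≥0∞) := by
    rcases h with h | h
    · exact (edist_le_pathDist _ g (edge_bound g hg) u v).trans h
    · rw [edist_comm]; exact (edist_le_pathDist _ g (edge_bound g hg) v u).trans h
  by_contra hne
  have hgu : g u = ((v.val.2 : ℤ) : ℝ) := by simp only [hgdef, if_neg hne]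
  have hgv : g v = 0 := by simp [hgdef]
  rw [hgu, hgv] at key
  have hvy : (0:ℝ) ≤ ((v.val.2 : ℤ) : ℝ) := by exact_mod_cast (by omega : (0:ℤ) ≤ v.val.2)
  rw [edist_dist, Real.dist_eq, sub_zero, abs_of_nonneg hvy, ← ENNReal.ofReal_natCast] at key
  have := (ENNReal.ofReal_le_ofReal_iff (by positivity)).1 key
  have hnv : (n : ℝ) < ((v.val.2 : ℤ) : ℝ) := by exact_mod_cast hv
  linarith
theorem comb_x_nonneg (p : Comb) : 0 ≤ p.val.1 := by
  rcases p.property with ⟨_, hx⟩ | ⟨m, j, _, _, _, hx, _⟩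
  · exact hx
  · rw [hx]; positivity

theorem axis_mem (x : ℤ) (hx : 0 ≤ x) : ((x, (0 : ℤ)) : ℤ × ℤ) ∈ combSet :=
  Or.inl ⟨rfl, hx⟩

theorem axis_dist (p q : Comb) (hp : p.val.2 = 0) (hq : q.val.2 = 0) :
    combDist p q = edist (combProj p) (combProj q) := by
  refine le_antisymm ?_ (proj_lip p q)
  set a := p.val.1 with ha
  set b := q.val.1 with hb
  have ha0 : 0 ≤ a := comb_x_nonneg p
  have hb0 : 0 ≤ b := comb_x_nonneg q
  set N : ℕ := (b - a).natAbs with hN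
  set e : ℤ := if a ≤ b then 1 else -1 with he
  have heN : a + e * N = b := by
    by_cases hab : a ≤ b <;> simp only [he, if_pos, if_neg, hab, ite_true, ite_false] <;> omega
  have hmem : ∀ i : ℕ, ((a + e * (min i N : ℕ), (0 : ℤ)) : ℤ × ℤ) ∈ combSet := by
    intro i
    refine axis_mem _ ?_
    by_cases hab : a ≤ b <;> simp only [he, hab, ite_true, ite_false] <;> omega
  set c : ℕ → Comb := fun i => ⟨(a + e * (min i N : ℕ), (0 : ℤ)), hmem i⟩ with hc
  have hc0 : c 0 = p := by
    apply Subtype.ext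
    have hv : p.val = (a, p.val.2) := by rw [ha]
    have h0 : ((min 0 N : ℕ) : ℤ) = 0 := by omega
    show (a + e * ((min 0 N : ℕ) : ℤ), (0:ℤ)) = p.val
    rw [h0, hv, hp]; simp
  have hcN : c N = q := by
    apply Subtype.ext
    have hv : q.val = (b, q.val.2) := by rw [hb]
    show (a + e * ((min N N : ℕ) : ℤ), (0:ℤ)) = q.val
    rw [min_self, hv, hq, heN]
  have hadj : ∀ i : ℕ, i < N → combAdj (c i) (c (i + 1)) := by
    intro i hi
    constructor
    · show |a + e * ((min i N : ℕ) : ℤ) - (a + e * ((min (i+1) N : ℕ) : ℤ))| + |(0:ℤ) - 0| = 1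
      have h1 : ((min i N : ℕ) : ℤ) = i := by omega
      have h2 : ((min (i+1) N : ℕ) : ℤ) = i + 1 := by omega
      rw [h1, h2]
      have h3 : a + e * (i:ℤ) - (a + e * ((i:ℤ) + 1)) = -e := by ring
      rw [h3]
      by_cases hab : a ≤ b <;> simp only [he, hab, ite_true, ite_false] <;> norm_num
    · exact Or.inr ⟨rfl, rfl⟩
  have hsum : ∑ i ∈ Finset.range N, combEdge (c i) (c (i + 1)) = (N : ℝ≥0∞) := by
    have hone : ∀ i ∈ Finset.range N, combEdge (c i) (c (i + 1)) = 1 := by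
      intro i hi
      unfold combEdge
      rw [if_pos (hadj i (Finset.mem_range.1 hi))]
    rw [Finset.sum_congr rfl hone, Finset.sum_const, Finset.card_range, nsmul_eq_mul, mul_one]
  have hpath : combDist p q ≤ (N : ℝ≥0∞) := by
    rw [combDist, pathDist]
    refine iInf_le_of_le N (iInf_le_of_le c (iInf_le_of_le hc0 (iInf_le_of_le hcN ?_)))
    rw [hsum]
  refine hpath.trans (le_of_eq ?_)
  rw [edist_dist, Real.dist_eq, combProj, combProj]
  have habs : |(a : ℝ) - (b : ℝ)| = ((N : ℤ) : ℝ) := by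
    have h7 : |a - b| = (N : ℤ) := by rw [Int.abs_eq_natAbs]; exact_mod_cast (by omega : (a-b).natAbs = N)
    rw [← Int.cast_sub, ← Int.cast_abs, h7]
  rw [habs]
  push_cast
  rw [ENNReal.ofReal_natCast]
theorem tri_succ (k : ℕ) : (k+1)*((k+1)-1)/2 = k*(k-1)/2 + k := by
  rw [← Finset.sum_range_id, ← Finset.sum_range_id, Finset.sum_range_succ]

theorem tooth_mem (m j : ℕ) (hm : 1 ≤ m) (hj1 : 1 ≤ j) (hjm : j ≤ m) (y : ℤ)
    (h0 : 0 ≤ y) (hy : y ≤ (m : ℤ)) :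
    ((((combBase m + j * (j - 1) / 2 : ℕ) : ℤ), y) : ℤ × ℤ) ∈ combSet :=
  Or.inr ⟨m, j, hm, hj1, hjm, rfl, h0, hy⟩

theorem teeth (σ n : ℕ) (hσ : 1 ≤ σ) :
    ∃ v v' : Comb, (n : ℤ) < v.val.2 ∧ (n : ℤ) < v'.val.2 ∧
      edist (combProj v) (combProj v') = (σ : ℝ≥0∞) + 1 := by
  set m : ℕ := n + σ + 2 with hm
  set X1 : ℕ := combBase m + (σ+1) * ((σ+1) - 1) / 2 with hX1
  set X2 : ℕ := combBase m + (σ+2) * ((σ+2) - 1) / 2 with hX2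
  refine ⟨⟨((X1 : ℤ), (m : ℤ)), tooth_mem m (σ+1) (by omega) (by omega) (by omega) (m : ℤ)
      (by positivity) le_rfl⟩,
    ⟨((X2 : ℤ), (m : ℤ)), tooth_mem m (σ+2) (by omega) (by omega) (by omega) (m : ℤ)
      (by positivity) le_rfl⟩, ?_, ?_, ?_⟩
  · show (n : ℤ) < (m : ℤ); omega
  · show (n : ℤ) < (m : ℤ); omega
  · have hstep : X2 = X1 + (σ + 1) := by
      have h9 : (σ+2)*((σ+2)-1)/2 = (σ+1)*((σ+1)-1)/2 + (σ+1) := tri_succ (σ + 1)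
      omega
    show edist (((X1 : ℤ) : ℝ)) (((X2 : ℤ) : ℝ)) = (σ : ℝ≥0∞) + 1
    rw [edist_dist, Real.dist_eq]
    have hd : ((X1 : ℤ) : ℝ) - ((X2 : ℤ) : ℝ) = -((σ : ℝ) + 1) := by
      rw [hstep]; push_cast; ring
    rw [hd, abs_neg, abs_of_nonneg (by positivity)]
    rw [ENNReal.ofReal_add (by positivity) (by norm_num), ENNReal.ofReal_natCast,
      ENNReal.ofReal_one]

/-- The comb example: `f : X → [0,∞)` is a 1-Lipschitz map whose restriction
`x ↦ (x,0)` of the axis gives an isometrically embedded right inverse, yet for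
all `σ, n ≥ 1` there are `v, v'` with `|f v - f v'| = σ + 1` such that all
points `u, u'` at distance at most `n` from `v, v'` satisfy
`|f u - f u'| = σ + 1 > σ`; hence the coarse kernel filtration of `f` does
not stabilise: `K_{σ+1}(f) ⊄ N_n(K_σ(f))` for every `n`. -/
theorem comb_split_epi_kernel_filtration_not_stable :
    (∀ p q : Comb, edist (combProj p) (combProj q) ≤ combDist p q) ∧
    (∀ x : ℤ, 0 ≤ x → ((x, (0 : ℤ)) : ℤ × ℤ) ∈ combSet) ∧
    (∀ p q : Comb, p.val.2 = 0 → q.val.2 = 0 →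
      combDist p q = edist (combProj p) (combProj q)) ∧
    (∀ σ n : ℕ, 1 ≤ σ → 1 ≤ n →
      ∃ v v' : Comb,
        edist (combProj v) (combProj v') = (σ : ℝ≥0∞) + 1 ∧
        ∀ u u' : Comb, combDist u v ≤ (n : ℝ≥0∞) → combDist u' v' ≤ (n : ℝ≥0∞) →
          edist (combProj u) (combProj u') = (σ : ℝ≥0∞) + 1) ∧
    (∀ σ n : ℕ, 1 ≤ σ →
      ¬ (∀ p q : Comb, edist (combProj p) (combProj q) ≤ (σ : ℝ≥0∞) + 1 →
        ∃ p' q' : Comb, edist (combProj p') (combProj q') ≤ (σ : ℝ≥0∞) ∧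
          combDist p p' ≤ (n : ℝ≥0∞) ∧ combDist q q' ≤ (n : ℝ≥0∞))) := by
  refine ⟨proj_lip, axis_mem, axis_dist, ?_, ?_⟩
  · intro σ n hσ hn
    obtain ⟨v, v', h1, h2, h3⟩ := teeth σ n hσ
    refine ⟨v, v', h3, fun u u' hu hu' => ?_⟩
    have c1 : u.val.1 = v.val.1 := col_of_dist_le v u n h1 (Or.inl hu)
    have c2 : u'.val.1 = v'.val.1 := col_of_dist_le v' u' n h2 (Or.inl hu')
    have e1 : combProj u = combProj v := by unfold combProj; rw [c1]
    have e2 : combProj u' = combProj v' := by unfold combProj; rw [c2]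
    rw [e1, e2]; exact h3
  · intro σ n hσ H
    obtain ⟨v, v', h1, h2, h3⟩ := teeth σ n hσ
    obtain ⟨p', q', hle, hd1, hd2⟩ := H v v' h3.le
    have c1 : p'.val.1 = v.val.1 := col_of_dist_le v p' n h1 (Or.inr hd1)
    have c2 : q'.val.1 = v'.val.1 := col_of_dist_le v' q' n h2 (Or.inr hd2)
    have e1 : combProj p' = combProj v := by unfold combProj; rw [c1]
    have e2 : combProj q' = combProj v' := by unfold combProj; rw [c2]
    rw [e1, e2, h3] at hle
    exact absurd hle (ENNReal.lt_add_right (by simp) one_ne_zero).not_ge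

end CoarseStmt
end
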